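/- For every w ∈ S̃_n one has the identity ∏_{k=1}^n (t_{w(k)} − t_n) = 2·∑_{k=1}^n (−1)^{n−k} f_k(w)·t_n^{n−k} in ℤ[t_1,…,t_n]; that is, ∏_{k=1}^n (τ_k − t_n) = 2·∑_{k=1}^n (−1)^{n−k} f_k·t_n^{n−k} as elements of ∏_{w∈S̃_n} R. Moreover, for every w ∈ S̃_n^+ (an even number of i with w(i) < 0) one has e_n(t_{w(1)},…,t_{w(n)}) = e_n(t_1,…,t_n), i.e. f_n(w) = 0, and hence ∏_{k=1}^n (t_{w(k)} − t_n) = −2t_n·∑_{k=1}^{n−1} (−1)^{n−1−k} f_k(w)·t_n^{n−1−k}. -/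
import Mathlib

open MvPolynomial

/-- The `i`-th elementary symmetric polynomial in the values `g k`. -/
noncomputable def eS {σ : Type*} [Fintype σ] {R : Type*} [CommRing R] (i : ℕ) (g : σ → R) : R :=
  ∑ S ∈ Finset.powersetCard i Finset.univ, ∏ k ∈ S, g k

/-- `R = ℤ[t_1,…,t_n]`. -/
abbrev Rn (n : ℕ) : Type := MvPolynomial (Fin n) ℤ

/-- A signed permutation of `{±1,…,±n}` in one-line notation: `w` is determined by the values
`w 0, …, w (n-1)` (representing `w(1),…,w(n)`), which are nonzero integers of absolute value
at most `n` with pairwise distinct absolute values; the condition `w(-i) = -w(i)` determines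
the rest of the bijection of `{±1,…,±n}`. -/
def IsSignedPerm {n : ℕ} (w : Fin n → ℤ) : Prop :=
  (∀ i, w i ≠ 0 ∧ (w i).natAbs ≤ n) ∧ Function.Injective fun i => (w i).natAbs

/-- The signed permutation group `S̃_n` (one-line notation). -/
def SP (n : ℕ) : Type := {w : Fin n → ℤ // IsSignedPerm w}

/-- `t_m` for `m ∈ {±1,…,±n}`, with the convention `t_{-m} = -t_m`. -/
noncomputable def tvar (n : ℕ) (m : ℤ) : Rn n :=
  if h : m.natAbs - 1 < n then C m.sign * X ⟨m.natAbs - 1, h⟩ else 0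

/-- `e_i(t_{w(1)},…,t_{w(n)}) - e_i(t_1,…,t_n)`; this is `2·f_i(w)`. -/
noncomputable def diffS (n : ℕ) (i : ℕ) (w : SP n) : Rn n :=
  eS i (fun k => tvar n (w.1 k)) - eS i (fun k : Fin n => (X k : Rn n))

/-- Vieta in a commutative ring. -/
lemma prod_sub_eq_sum_eS {R : Type*} [CommRing R] {n : ℕ} (g : Fin n → R) (x : R) :
    ∏ k : Fin n, (g k - x) =
      ∑ j ∈ Finset.range (n + 1), (-1 : R) ^ (n - j) * eS j g * x ^ (n - j) := by
  have hv := Multiset.prod_X_add_C_eq_sum_esymm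
    ((Finset.univ.val : Multiset (Fin n)).map fun k => -(g k))
  have hcard : Multiset.card ((Finset.univ.val : Multiset (Fin n)).map fun k => -(g k)) = n := by
    simp
  rw [hcard] at hv
  have hev := congrArg (Polynomial.eval x) hv
  simp only [Polynomial.eval_finset_sum, Polynomial.eval_mul, Polynomial.eval_pow,
    Polynomial.eval_C, Polynomial.eval_X] at hev
  have hlhs : Polynomial.eval x
      ((Multiset.map (fun r => Polynomial.X + Polynomial.C r)
        ((Finset.univ.val : Multiset (Fin n)).map fun k => -(g k))).prod)
      = ∏ k : Fin n, (x - g k) := by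
    rw [Multiset.map_map]
    rw [show ((fun r => Polynomial.X + Polynomial.C r) ∘ fun k => -(g k)) =
      fun k => Polynomial.X + Polynomial.C (-(g k)) from rfl]
    rw [← Finset.prod_eq_multiset_prod, Polynomial.eval_prod]
    simp [sub_eq_add_neg]
  rw [hlhs] at hev
  have hesymm : ∀ j, ((Finset.univ.val : Multiset (Fin n)).map fun k => -(g k)).esymm j
      = (-1 : R) ^ j * eS j g := by
    intro j
    rw [Finset.esymm_map_val]
    rw [eS, Finset.mul_sum]
    apply Finset.sum_congr rfl
    intro t ht
    rw [Finset.mem_powersetCard] at ht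
    have : (t.prod fun k => -(g k)) = ∏ k ∈ t, (-1 : R) * g k :=
      Finset.prod_congr rfl fun k _ => by ring
    rw [this, Finset.prod_mul_distrib, Finset.prod_const, ht.2]
  have key : ∏ k : Fin n, (x - g k) =
      ∑ j ∈ Finset.range (n + 1), (-1 : R) ^ j * eS j g * x ^ (n - j) := by
    rw [hev]; apply Finset.sum_congr rfl; intro j _; rw [hesymm]
  have hneg : ∏ k : Fin n, (g k - x) = (-1 : R) ^ n * ∏ k : Fin n, (x - g k) := by
    rw [show (fun k : Fin n => g k - x) = fun k => (-1 : R) * (x - g k) from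
      funext fun k => by ring]
    rw [Finset.prod_mul_distrib, Finset.prod_const, Finset.card_univ, Fintype.card_fin]
  rw [hneg, key, Finset.mul_sum]
  apply Finset.sum_congr rfl
  intro j hj
  rw [Finset.mem_range] at hj
  have hj' : j ≤ n := by omega
  have hpow : (-1 : R) ^ n * (-1 : R) ^ j = (-1 : R) ^ (n - j) := by
    rw [← pow_add, show n + j = (n - j) + 2 * j by omega, pow_add, pow_mul]
    simp
  calc (-1 : R) ^ n * ((-1 : R) ^ j * eS j g * x ^ (n - j))
      = ((-1 : R) ^ n * (-1 : R) ^ j) * eS j g * x ^ (n - j) := by ring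
    _ = (-1 : R) ^ (n - j) * eS j g * x ^ (n - j) := by rw [hpow]

lemma eS_zero {σ : Type*} [Fintype σ] {R : Type*} [CommRing R] (g : σ → R) : eS 0 g = 1 := by
  rw [eS, Finset.powersetCard_zero, Finset.sum_singleton, Finset.prod_empty]

lemma eS_univ {R : Type*} [CommRing R] {n : ℕ} (g : Fin n → R) : eS n g = ∏ k, g k := by
  have h : Finset.powersetCard n (Finset.univ : Finset (Fin n)) = {Finset.univ} := by
    simpa using Finset.powersetCard_self (Finset.univ : Finset (Fin n))
  rw [eS, h, Finset.sum_singleton]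

lemma main1 {n : ℕ} (f : ℕ → SP n → Rn n) (hf : ∀ i w, 2 * f i w = diffS n i w)
    (w : SP n) (i : Fin n) :
    ∏ k : Fin n, (tvar n (w.1 k) - X i) =
      2 * ∑ k ∈ Finset.Icc 1 n, (-1 : Rn n) ^ (n - k) * f k w * (X i : Rn n) ^ (n - k) := by
  have hA := prod_sub_eq_sum_eS (fun k => tvar n (w.1 k)) (X i : Rn n)
  have hB := prod_sub_eq_sum_eS (fun k : Fin n => (X k : Rn n)) (X i : Rn n)
  have hB0 : ∏ k : Fin n, ((X k : Rn n) - X i) = 0 :=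
    Finset.prod_eq_zero (Finset.mem_univ i) (sub_self _)
  have hsum0 : (0 : Rn n) = ∑ j ∈ Finset.range (n + 1),
      (-1 : Rn n) ^ (n - j) * eS j (fun k : Fin n => (X k : Rn n)) * (X i : Rn n) ^ (n - j) := by
    rw [← hB, hB0]
  rw [hA]
  have hsplit : ∀ j, (-1 : Rn n) ^ (n - j) * eS j (fun k => tvar n (w.1 k)) * (X i : Rn n) ^ (n - j)
      = (-1 : Rn n) ^ (n - j) * diffS n j w * (X i : Rn n) ^ (n - j)
        + (-1 : Rn n) ^ (n - j) * eS j (fun k : Fin n => (X k : Rn n)) * (X i : Rn n) ^ (n - j) := by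
    intro j; rw [diffS]; ring
  rw [Finset.sum_congr rfl (fun j _ => hsplit j), Finset.sum_add_distrib, ← hsum0, add_zero]
  have hrange : Finset.range (n + 1) = insert 0 (Finset.Icc 1 n) := by
    apply Finset.ext; intro a; simp; omega
  rw [hrange, Finset.sum_insert (by simp)]
  have h0 : diffS n 0 w = 0 := by rw [diffS, eS_zero, eS_zero, sub_self]
  rw [h0, mul_zero, zero_mul, zero_add, Finset.mul_sum]
  apply Finset.sum_congr rfl
  intro k _
  rw [← hf k w]
  ring

lemma prod_tvar_eq {n : ℕ} (w : SP n)
    (hw : Even (Finset.univ.filter fun i : Fin n => w.1 i < 0).card) :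
    ∏ k : Fin n, tvar n (w.1 k) = ∏ k : Fin n, (X k : Rn n) := by
  have habs : ∀ k : Fin n, 1 ≤ (w.1 k).natAbs ∧ (w.1 k).natAbs ≤ n := fun k =>
    ⟨Int.natAbs_pos.mpr (w.2.1 k).1, (w.2.1 k).2⟩
  have hlt : ∀ k : Fin n, (w.1 k).natAbs - 1 < n := fun k => by have := habs k; omega
  have htv : ∀ k, tvar n (w.1 k)
      = C (w.1 k).sign * X (⟨(w.1 k).natAbs - 1, hlt k⟩ : Fin n) :=
    fun k => dif_pos (hlt k)
  rw [Finset.prod_congr rfl (fun k _ => htv k), Finset.prod_mul_distrib]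
  have hX : ∏ k : Fin n, (X (⟨(w.1 k).natAbs - 1, hlt k⟩ : Fin n) : Rn n)
      = ∏ k : Fin n, (X k : Rn n) := by
    apply Fintype.prod_bijective (fun k : Fin n => (⟨(w.1 k).natAbs - 1, hlt k⟩ : Fin n))
    · refine Finite.injective_iff_bijective.mp ?_
      intro a b hab
      apply w.2.2
      have h1 := congrArg Fin.val hab
      simp only at h1
      have h2 := habs a
      have h3 := habs b
      show (w.1 a).natAbs = (w.1 b).natAbs
      omega
    · intro x; rfl
  rw [hX]
  have hsign : ∏ k : Fin n, (w.1 k).sign = 1 := by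
    have hs : ∀ k : Fin n, (w.1 k).sign = if w.1 k < 0 then (-1 : ℤ) else 1 := by
      intro k
      rcases lt_trichotomy (w.1 k) 0 with h | h | h
      · rw [if_pos h, Int.sign_eq_neg_one_of_neg h]
      · exact absurd h (w.2.1 k).1
      · rw [if_neg (by omega), Int.sign_eq_one_of_pos h]
    rw [Finset.prod_congr rfl fun k _ => hs k,
      ← Finset.prod_filter_mul_prod_filter_not Finset.univ (fun i => w.1 i < 0)]
    have h1 : ∏ k ∈ Finset.filter (fun i => w.1 i < 0) Finset.univ,
        (if w.1 k < 0 then (-1 : ℤ) else 1)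
        = (-1 : ℤ) ^ (Finset.univ.filter fun i : Fin n => w.1 i < 0).card := by
      rw [Finset.prod_congr rfl (fun k hk => if_pos (Finset.mem_filter.mp hk).2),
        Finset.prod_const]
    have h2 : ∏ k ∈ Finset.filter (fun i => ¬ w.1 i < 0) Finset.univ,
        (if w.1 k < 0 then (-1 : ℤ) else 1) = 1 :=
      Finset.prod_eq_one fun k hk => if_neg (Finset.mem_filter.mp hk).2
    rw [h1, h2, mul_one, hw.neg_one_pow]
  rw [← map_prod, hsign, map_one, one_mul]

lemma twoNeZeroRn (n : ℕ) : (2 : Rn n) ≠ 0 := two_ne_zero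

/-- For every `w ∈ S̃_n`, `∏_{k=1}^n (t_{w(k)} - t_n) = 2·∑_{k=1}^n (-1)^{n-k} f_k(w) t_n^{n-k}`;
moreover for `w ∈ S̃_n^+` (an even number of negative entries) one has
`e_n(t_{w(1)},…,t_{w(n)}) = e_n(t_1,…,t_n)`, i.e. `f_n(w) = 0`, and hence
`∏_{k=1}^n (t_{w(k)} - t_n) = -2t_n·∑_{k=1}^{n-1} (-1)^{n-1-k} f_k(w) t_n^{n-1-k}`.
Here `t_n = X ⟨n-1⟩` and the `f_i` are characterized by `2·f i w = e_i(t_w) - e_i(t)`. -/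
theorem product_formula_typeD (n : ℕ) (hn : 1 ≤ n)
    (f : ℕ → SP n → Rn n) (hf : ∀ i w, 2 * f i w = diffS n i w) :
    (∀ w : SP n,
      ∏ k : Fin n, (tvar n (w.1 k) - (X ⟨n - 1, by omega⟩ : Rn n)) =
        2 * ∑ k ∈ Finset.Icc 1 n,
          (-1 : Rn n) ^ (n - k) * f k w * (X ⟨n - 1, by omega⟩ : Rn n) ^ (n - k)) ∧
    (∀ w : SP n, Even (Finset.univ.filter fun i : Fin n => w.1 i < 0).card →
      (eS n (fun k => tvar n (w.1 k)) = eS n (fun k : Fin n => (X k : Rn n)) ∧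
       f n w = 0 ∧
       ∏ k : Fin n, (tvar n (w.1 k) - (X ⟨n - 1, by omega⟩ : Rn n)) =
         -(2 * (X ⟨n - 1, by omega⟩ : Rn n)) *
           ∑ k ∈ Finset.Icc 1 (n - 1),
             (-1 : Rn n) ^ (n - 1 - k) * f k w *
               (X ⟨n - 1, by omega⟩ : Rn n) ^ (n - 1 - k))) := by
  constructor
  · intro w
    exact main1 f hf w _
  · intro w hw
    have h1 : eS n (fun k => tvar n (w.1 k)) = eS n (fun k : Fin n => (X k : Rn n)) := by
      rw [eS_univ, eS_univ, prod_tvar_eq w hw]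
    have hfn : f n w = 0 := by
      have h2 := hf n w
      rw [diffS, h1, sub_self] at h2
      rcases mul_eq_zero.mp h2 with h | h
      · exact absurd h (twoNeZeroRn n)
      · exact h
    refine ⟨h1, hfn, ?_⟩
    rw [main1 f hf w _]
    obtain ⟨m, rfl⟩ : ∃ m, n = m + 1 := ⟨n - 1, by omega⟩
    simp only [Nat.add_sub_cancel]
    rw [Finset.sum_Icc_succ_top (by omega : 1 ≤ m + 1)]
    rw [hfn, mul_zero, zero_mul, add_zero]
    rw [Finset.mul_sum, Finset.mul_sum]
    apply Finset.sum_congr rfl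
    intro k hk
    rw [Finset.mem_Icc] at hk
    rw [show m + 1 - k = (m - k) + 1 by omega, pow_succ, pow_succ]
    ring
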